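/- arXiv:math/0411104 — 6 statements merged into one kernel-verified Lean document; each statement's English description precedes it below -/
import Mathlib

section
/- Let n be a nonzero integer. The norm-preserving group acts transitively on the set of 3×3 integer matrices of determinant n if and only if n is squarefree; that is, (for all X, Y ∈ M₃(ℤ) with det(X) = det(Y) = n there exist P, Q ∈ GL₃(ℤ) with det(P) = det(Q) and P·X·Q⁻¹ = Y) if and only if n is squarefree. -/
/-!
Over a principal ideal domain every matrix of nonzero determinant is equivalent to a diagonal
one (Smith normal form). If the determinant is squarefree, the diagonal entries are pairwise
coprime, and a Bézout identity `u a + v b = 1` turns `diag(a, b)` into `diag(1, a b)`; so every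
such matrix is equivalent to `diag(1, 1, n)`. Since `det X = det Y ≠ 0`, any `P X Q = Y` has
`det P * det Q = 1`, which is the determinant condition for `P` and `Q⁻¹`.

Conversely, if `x² ∣ n` for a nonunit `x`, then all entries of the adjugate of `diag(1, x, n / x)`
are divisible by `x`. This is preserved by equivalence, as `adj (P X Q) = adj Q * adj X * adj P`,
but the adjugate of `diag(1, 1, n)` has an entry `1`.
-/

open Matrix

namespace Matrix

variable {R ι : Type*} [CommRing R] [Fintype ι] [DecidableEq ι]

def Equivalent (X Y : Matrix ι ι R) : Prop :=
  ∃ P Q : GL ι R, (P : Matrix ι ι R) * X * Q = Y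

namespace Equivalent

variable {X Y Z : Matrix ι ι R}

@[symm]
theorem symm (h : Equivalent X Y) : Equivalent Y X := by
  obtain ⟨P, Q, rfl⟩ := h
  exact ⟨P⁻¹, Q⁻¹, by simp [Matrix.mul_assoc]⟩

@[trans]
theorem trans (h₁ : Equivalent X Y) (h₂ : Equivalent Y Z) : Equivalent X Z := by
  obtain ⟨P, Q, rfl⟩ := h₁
  obtain ⟨P', Q', rfl⟩ := h₂
  exact ⟨P' * P, Q * Q', by simp [Matrix.mul_assoc]⟩

instance : IsTrans (Matrix ι ι R) Equivalent := ⟨fun _ _ _ ↦ trans⟩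

theorem submatrix {κ : Type*} [Fintype κ] [DecidableEq κ] (h : Equivalent X Y) (e : κ ≃ ι) :
    Equivalent (X.submatrix e e) (Y.submatrix e e) := by
  obtain ⟨P, Q, rfl⟩ := h
  let σ : GL ι R ≃* GL κ R := Units.mapEquiv (reindexAlgEquiv R R e.symm).toMulEquiv
  exact ⟨σ P, σ Q, by simp [σ, submatrix_mul_equiv]⟩

theorem det_eq_unit_mul (h : Equivalent X Y) : ∃ u : Rˣ, Y.det = u * X.det := by
  obtain ⟨P, Q, rfl⟩ := h
  exact ⟨GeneralLinearGroup.det P * GeneralLinearGroup.det Q, by simp [det_mul]; ring⟩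

theorem exists_det_eq [IsDomain R] (h : Equivalent X Y) (hdet : X.det = Y.det)
    (hX : X.det ≠ 0) :
    ∃ P Q : GL ι R, (P : Matrix ι ι R).det = (Q : Matrix ι ι R).det ∧
      (P : Matrix ι ι R) * X * ((Q⁻¹ : GL ι R) : Matrix ι ι R) = Y := by
  obtain ⟨P, Q, rfl⟩ := h
  refine ⟨P, Q⁻¹, ?_, by simp [Matrix.mul_assoc]⟩
  have hQ : (Q : Matrix ι ι R).det ≠ 0 := (GeneralLinearGroup.det Q).ne_zero
  have hPQ : (P : Matrix ι ι R).det * (Q : Matrix ι ι R).det = 1 := by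
    simp only [det_mul] at hdet
    exact mul_left_cancel₀ hX (by linear_combination -hdet)
  have hQQ : ((Q⁻¹ : GL ι R) : Matrix ι ι R).det * (Q : Matrix ι ι R).det = 1 := by
    rw [← det_mul, ← GeneralLinearGroup.coe_mul, inv_mul_cancel, GeneralLinearGroup.coe_one,
      det_one]
  exact mul_right_cancel₀ hQ (hPQ.trans hQQ.symm)

end Equivalent

theorem dvd_mul_mul_apply {l m n o : Type*} [Fintype m] [Fintype n] {p : R} {A : Matrix m n R}
    (hA : ∀ i j, p ∣ A i j) (B : Matrix l m R) (C : Matrix n o R) (i : l) (j : o) :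
    p ∣ (B * A * C) i j := by
  choose A' hA' using hA
  have hA : A = p • of A' := by ext; simp [hA']
  rw [hA, Matrix.mul_smul, Matrix.smul_mul]
  exact dvd_mul_right _ _

theorem Equivalent.dvd_adjugate_apply {p : R} {X Y : Matrix ι ι R} (h : Equivalent X Y)
    (hX : ∀ i j, p ∣ X.adjugate i j) (i j : ι) : p ∣ Y.adjugate i j := by
  obtain ⟨P, Q, rfl⟩ := h
  rw [adjugate_mul_distrib, adjugate_mul_distrib, ← Matrix.mul_assoc]
  exact dvd_mul_mul_apply hX _ _ i j

theorem not_equivalent_diagonal_of_not_isUnit {x : R} (hx : ¬IsUnit x) (m : R) :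
    ¬Equivalent (diagonal ![1, x, x * m]) (diagonal ![1, 1, x * x * m]) := by
  intro h
  have hdvd : ∀ i j, x ∣ (diagonal ![1, x, x * m]).adjugate i j := by
    intro i j
    rw [adjugate_fin_three]
    fin_cases i <;> fin_cases j <;> simp
  refine hx (isUnit_of_dvd_one ?_)
  simpa [-adjugate_diagonal, adjugate_fin_three] using h.dvd_adjugate_apply hdvd 2 2

theorem exists_equivalent_diagonal [IsDomain R] [IsPrincipalIdealRing R] (X : Matrix ι ι R)
    (hX : X.det ≠ 0) : ∃ a : ι → R, Equivalent X (diagonal a) := by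
  let s := Pi.basisFun R ι
  let f := toLin' X
  have hf : Function.Injective f := mulVec_injective_of_det_ne_zero hX
  obtain ⟨d, a, bN, hbN⟩ :=
    (LinearMap.range f).exists_smith_normal_form_of_rank_eq s (LinearMap.finrank_range_of_inj hf)
  let c := bN.map (LinearEquiv.ofInjective f hf).symm
  have hfc : ∀ i, f (c i) = a i • d i := fun i ↦ by
    rw [← hbN, ← LinearEquiv.ofInjective_apply f (h := hf)]
    simp [c]
  have hdiag : LinearMap.toMatrix c d f = diagonal a := by
    ext j i
    rw [LinearMap.toMatrix_apply, hfc, map_smul, d.repr_self, Finsupp.smul_single]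
    rcases eq_or_ne j i with rfl | hji
    · simp
    · simp [hji]
  let _ := s.invertibleToMatrix d
  let _ := c.invertibleToMatrix s
  refine ⟨a, Equivalent.symm ⟨(isUnit_of_invertible (s.toMatrix d)).unit,
    (isUnit_of_invertible (c.toMatrix s)).unit, ?_⟩⟩
  simp only [IsUnit.unit_spec, ← hdiag, basis_toMatrix_mul_linearMap_toMatrix_mul_basis_toMatrix]
  exact LinearMap.toMatrix_toLin s s X

theorem equivalent_diagonal_units_mul (a : ι → R) (u : ι → Rˣ) :
    Equivalent (diagonal a) (diagonal fun i ↦ u i * a i) :=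
  ⟨⟨diagonal fun i ↦ u i, diagonal fun i ↦ ↑(u i)⁻¹, by simp, by simp⟩, 1, by simp⟩

theorem equivalent_diagonal_of_isCoprime {a b : R} (hab : IsCoprime a b) (c : R) :
    Equivalent (diagonal ![a, b, c]) (diagonal ![1, a * b, c]) := by
  obtain ⟨u, v, huv⟩ := hab
  have hunit : ∀ M : Matrix (Fin 3) (Fin 3) R, M.det = 1 → IsUnit M := fun M hM ↦
    (isUnit_iff_isUnit_det M).2 (hM ▸ isUnit_one)
  refine ⟨(hunit !![u, v, 0; -b, a, 0; 0, 0, 1] ?_).unit,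
    (hunit !![1, -(v * b), 0; 1, u * a, 0; 0, 0, 1] ?_).unit, ?_⟩
  · simp [det_fin_three]; linear_combination huv
  · simp [det_fin_three]; linear_combination huv
  · ext i j
    fin_cases i <;> fin_cases j <;> simp [mul_apply, Fin.sum_univ_three, vecMul_diagonal, huv] <;>
      first | ring1 | linear_combination (a * b) * huv

theorem equivalent_diagonal_of_isCoprime' {b c : R} (hbc : IsCoprime b c) (a : R) :
    Equivalent (diagonal ![a, b, c]) (diagonal ![a, 1, b * c]) := by
  have h := (equivalent_diagonal_of_isCoprime hbc a).submatrix (finRotate 3).symm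
  rw [submatrix_diagonal_equiv, submatrix_diagonal_equiv] at h
  convert h using 2 <;> ext i <;> fin_cases i <;> rfl

section PrincipalIdealDomain

variable [IsDomain R] [IsPrincipalIdealRing R]

theorem equivalent_diagonal_det_of_squarefree (X : Matrix (Fin 3) (Fin 3) R)
    (hX : Squarefree X.det) : Equivalent X (diagonal ![1, 1, X.det]) := by
  obtain ⟨a, hXa⟩ := exists_equivalent_diagonal X hX.ne_zero
  obtain ⟨u, hu⟩ := hXa.det_eq_unit_mul
  have ha : a = ![a 0, a 1, a 2] := by ext i; fin_cases i <;> rfl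
  rw [ha, det_diagonal] at hu
  simp only [Fin.prod_univ_three, cons_val_zero, cons_val_one, cons_val] at hu
  have hsq : Squarefree (a 0 * a 1 * a 2) :=
    (Associated.squarefree_iff ⟨u, by rw [hu, mul_comm]⟩).1 hX
  obtain ⟨h01_2, h01, -⟩ := squarefree_mul_iff.1 hsq
  obtain ⟨h0_1, -, -⟩ := squarefree_mul_iff.1 h01
  rw [ha] at hXa
  calc Equivalent X (diagonal ![a 0, a 1, a 2]) := hXa
    Equivalent _ (diagonal ![1, a 0 * a 1, a 2]) :=
      equivalent_diagonal_of_isCoprime (isRelPrime_iff_isCoprime.1 h0_1) _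
    Equivalent _ (diagonal ![1, 1, a 0 * a 1 * a 2]) :=
      equivalent_diagonal_of_isCoprime' (isRelPrime_iff_isCoprime.1 h01_2) _
    Equivalent _ (diagonal ![1, 1, X.det]) := by
      convert equivalent_diagonal_units_mul _ ![1, 1, u⁻¹] using 2
      ext i
      fin_cases i <;> simp [hu]

theorem equivalent_of_det_eq_of_squarefree {X Y : Matrix (Fin 3) (Fin 3) R}
    (hX : Squarefree X.det) (hXY : X.det = Y.det) : Equivalent X Y := by
  have hX' := equivalent_diagonal_det_of_squarefree X hX
  have hY' := equivalent_diagonal_det_of_squarefree Y (hXY ▸ hX)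
  rw [← hXY] at hY'
  exact hX'.trans hY'.symm

end PrincipalIdealDomain

end Matrix

theorem transitive_det_iff_squarefree_general (n : ℤ) :
    (∀ X Y : Matrix (Fin 3) (Fin 3) ℤ, X.det = n → Y.det = n →
      ∃ P Q : GL (Fin 3) ℤ,
        ((P : Matrix (Fin 3) (Fin 3) ℤ).det = (Q : Matrix (Fin 3) (Fin 3) ℤ).det) ∧
        (P : Matrix (Fin 3) (Fin 3) ℤ) * X * ((Q⁻¹ : GL (Fin 3) ℤ) : Matrix (Fin 3) (Fin 3) ℤ)
          = Y)
    ↔ Squarefree n := by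
  refine ⟨fun H ↦ ?_, fun hn X Y hX hY ↦ ?_⟩
  · by_contra hn
    obtain ⟨x, ⟨m, rfl⟩, hx⟩ : ∃ x, x * x ∣ n ∧ ¬IsUnit x := by simpa [Squarefree] using hn
    obtain ⟨P, Q, -, hPQ⟩ := H (diagonal ![1, x, x * m]) (diagonal ![1, 1, x * x * m])
      (by simp [Fin.prod_univ_three]; ring) (by simp [Fin.prod_univ_three])
    exact not_equivalent_diagonal_of_not_isUnit hx m ⟨P, Q⁻¹, hPQ⟩
  · have hXY : X.det = Y.det := hX.trans hY.symm
    exact (equivalent_of_det_eq_of_squarefree (hX ▸ hn) hXY).exists_det_eq hXY (hX ▸ hn.ne_zero)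

/-- **Transitivity on matrices of determinant `n` iff `n` is squarefree.**
For a nonzero integer `n`, the norm-preserving group of `M₃(ℤ)` acts transitively on
the set of 3×3 integer matrices of determinant `n` if and only if `n` is squarefree. -/
theorem transitive_det_iff_squarefree (n : ℤ) (hn : n ≠ 0) :
    (∀ X Y : Matrix (Fin 3) (Fin 3) ℤ, X.det = n → Y.det = n →
      ∃ P Q : GL (Fin 3) ℤ,
        ((P : Matrix (Fin 3) (Fin 3) ℤ).det = (Q : Matrix (Fin 3) (Fin 3) ℤ).det) ∧
        (P : Matrix (Fin 3) (Fin 3) ℤ) * X * ((Q⁻¹ : GL (Fin 3) ℤ) : Matrix (Fin 3) (Fin 3) ℤ)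
          = Y)
    ↔ Squarefree n :=
  transitive_det_iff_squarefree_general n
end

section
/- Let F be a field with char(F) ≠ 2 and char(F) ≠ 3. The norm-preserving group of M₃(F) acts transitively on matrices of rank 1, transitively on matrices of rank 2, and, for each k ∈ F with k ≠ 0, transitively on matrices of determinant k. That is: (1) for any X, Y ∈ M₃(F) of matrix rank 1 there exist P, Q ∈ GL₃(F) with det(P) = det(Q) and P·X·Q⁻¹ = Y; (2) the same holds for matrix rank 2; (3) for any k ≠ 0 and any X, Y ∈ M₃(F) with det(X) = det(Y) = k there exist such P, Q with P·X·Q⁻¹ = Y. -/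
/-!
Two matrices of the same rank are equivalent, `P X Q⁻¹ = Y`, by matching bases adapted to
kernels and ranges. If `Y` is singular, a left factor `1 + u vᵀ` with `vᵀ Y = 0` fixes `Y` and has
determinant `1 + vᵀ u`, which can be any nonzero scalar; composing `P` with it arranges
`det P = det Q`. Invertible matrices of equal determinant are related by `P = Y X⁻¹`, `Q = 1`.
-/

open Matrix

open Module Submodule

namespace LinearMap

variable {K V W : Type*} [Field K] [AddCommGroup V] [Module K V] [AddCommGroup W] [Module K W]

noncomputable def complEquivRange (f : V →ₗ[K] W) {C : Submodule K V} (hC : IsCompl (ker f) C) :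
    C ≃ₗ[K] range f :=
  (quotientEquivOfIsCompl _ _ hC).symm ≪≫ₗ f.quotKerEquivRange

@[simp]
theorem coe_complEquivRange_apply (f : V →ₗ[K] W) {C : Submodule K V} (hC : IsCompl (ker f) C)
    (c : C) : (complEquivRange f hC c : W) = f c := by
  simp [complEquivRange, quotKerEquivRange_apply_mk]

theorem exists_linearEquiv_comp_eq_comp [FiniteDimensional K V] [FiniteDimensional K W]
    {f g : V →ₗ[K] W} (h : finrank K (range f) = finrank K (range g)) :
    ∃ (e₁ : V ≃ₗ[K] V) (e₂ : W ≃ₗ[K] W), g ∘ₗ e₁ = e₂ ∘ₗ f := by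
  obtain ⟨Cf, hCf⟩ := (ker f).exists_isCompl
  obtain ⟨Cg, hCg⟩ := (ker g).exists_isCompl
  obtain ⟨Sf, hSf⟩ := (range f).exists_isCompl
  obtain ⟨Sg, hSg⟩ := (range g).exists_isCompl
  have hker : finrank K (ker f) = finrank K (ker g) := by
    have := f.finrank_range_add_finrank_ker; have := g.finrank_range_add_finrank_ker; omega
  have hS : finrank K Sf = finrank K Sg := by
    have := finrank_add_eq_of_isCompl hSf; have := finrank_add_eq_of_isCompl hSg; omega
  let ρ := LinearEquiv.ofFinrankEq _ _ h
  let τ : Cf ≃ₗ[K] Cg := complEquivRange f hCf ≪≫ₗ ρ ≪≫ₗ (complEquivRange g hCg).symm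
  let e₁ := (prodEquivOfIsCompl _ _ hCf).symm ≪≫ₗ
    (LinearEquiv.ofFinrankEq _ _ hker).prodCongr τ ≪≫ₗ prodEquivOfIsCompl _ _ hCg
  let e₂ := (prodEquivOfIsCompl _ _ hSf).symm ≪≫ₗ
    ρ.prodCongr (LinearEquiv.ofFinrankEq _ _ hS) ≪≫ₗ prodEquivOfIsCompl _ _ hSg
  refine ⟨e₁, e₂, ?_⟩
  ext v
  obtain ⟨⟨k, c⟩, rfl⟩ := (prodEquivOfIsCompl _ _ hCf).surjective v
  have hgτ : g (τ c) = ρ (complEquivRange f hCf c) := by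
    rw [← coe_complEquivRange_apply g hCg]; simp [τ]
  have hfv : f (prodEquivOfIsCompl _ _ hCf (k, c)) = (complEquivRange f hCf c : W) := by
    simp [LinearMap.mem_ker.mp k.2]
  have hgk : g (LinearEquiv.ofFinrankEq _ _ hker k) = 0 := (LinearEquiv.ofFinrankEq _ _ hker k).2
  simp only [LinearMap.comp_apply, LinearEquiv.coe_coe, hfv, e₁, e₂, LinearEquiv.trans_apply,
    LinearEquiv.symm_apply_apply, prodEquivOfIsCompl_symm_apply_left]
  simp [hgk, hgτ]

end LinearMap

namespace Matrix

variable {K : Type*} [Field K]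

theorem GeneralLinearGroup.exists_mulVecLin_eq {n : Type*} [Fintype n] [DecidableEq n]
    (e : (n → K) ≃ₗ[K] n → K) : ∃ P : GL n K, (P : Matrix n n K).mulVecLin = e :=
  ⟨toLin.symm ((LinearMap.GeneralLinearGroup.generalLinearEquiv K _).symm e), by
    rw [← coe_toLin, MulEquiv.apply_symm_apply]; rfl⟩

theorem exists_GL_mul_mul_inv_eq_of_rank_eq {m n : Type*} [Fintype m] [DecidableEq m]
    [Fintype n] [DecidableEq n] {X Y : Matrix m n K} (h : X.rank = Y.rank) :
    ∃ (P : GL m K) (Q : GL n K), (P : Matrix m m K) * X * ((Q⁻¹ : GL n K) : Matrix n n K) = Y := by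
  obtain ⟨e₁, e₂, he⟩ := LinearMap.exists_linearEquiv_comp_eq_comp h
  obtain ⟨P, hP⟩ := GeneralLinearGroup.exists_mulVecLin_eq e₂
  obtain ⟨Q, hQ⟩ := GeneralLinearGroup.exists_mulVecLin_eq e₁
  have hPQ : (P : Matrix m m K) * X = Y * (Q : Matrix n n K) :=
    toLin'.injective <| by simp only [toLin'_apply', mulVecLin_mul, hP, hQ, he]
  refine ⟨P, Q, ?_⟩
  rw [hPQ, Matrix.mul_assoc, ← Units.val_mul, mul_inv_cancel, Units.val_one, Matrix.mul_one]

variable {n : Type*} [Fintype n] [DecidableEq n]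

theorem exists_GL_det_eq_mul_eq_self {Y : Matrix n n K} (hY : Y.det = 0) {c : K} (hc : c ≠ 0) :
    ∃ U : GL n K, (U : Matrix n n K).det = c ∧ (U : Matrix n n K) * Y = Y := by
  obtain ⟨v, hv, hvY⟩ := exists_vecMul_eq_zero_iff.mpr hY
  obtain ⟨i, hi⟩ := Function.ne_iff.mp hv
  let U := 1 + replicateCol Unit (Pi.single i ((c - 1) / v i)) * replicateRow Unit v
  have hU : U.det = c := by
    rw [det_one_add_replicateCol_mul_replicateRow, dotProduct_single, mul_div_cancel₀ _ hi]
    ring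
  refine ⟨GeneralLinearGroup.mkOfDetNeZero U (hU ▸ hc), hU, ?_⟩
  simp [GeneralLinearGroup.mkOfDetNeZero, U, Matrix.add_mul, Matrix.mul_assoc,
    ← replicateRow_vecMul, hvY]

theorem det_eq_zero_of_rank_lt {X : Matrix n n K} (h : X.rank < Fintype.card n) : X.det = 0 := by
  by_contra hX
  exact h.ne (rank_of_isUnit X ((isUnit_iff_isUnit_det X).mpr (Ne.isUnit hX)))

/-- `X` and `Y` lie in one orbit of the norm-preserving maps `X ↦ P X Q⁻¹`, `det P = det Q`. -/
def DetPreservingEquivalent (X Y : Matrix n n K) : Prop :=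
  ∃ P Q : GL n K, (P : Matrix n n K).det = (Q : Matrix n n K).det ∧
    (P : Matrix n n K) * X * ((Q⁻¹ : GL n K) : Matrix n n K) = Y

namespace DetPreservingEquivalent

variable {X Y : Matrix n n K}

theorem of_rank_eq_of_det_eq_zero (h : X.rank = Y.rank) (hY : Y.det = 0) :
    X.DetPreservingEquivalent Y := by
  obtain ⟨P, Q, hPQ⟩ := exists_GL_mul_mul_inv_eq_of_rank_eq h
  have hP := GeneralLinearGroup.det_ne_zero P
  obtain ⟨U, hU, hUY⟩ := exists_GL_det_eq_mul_eq_self hY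
    (div_ne_zero (GeneralLinearGroup.det_ne_zero Q) hP)
  refine ⟨U * P, Q, ?_, ?_⟩
  · rw [Units.val_mul, det_mul, hU, div_mul_cancel₀ _ hP]
  · rw [Units.val_mul, Matrix.mul_assoc, Matrix.mul_assoc, ← Matrix.mul_assoc (P : Matrix n n K),
      hPQ, hUY]

theorem of_det_eq (h : X.det = Y.det) (hX : X.det ≠ 0) : X.DetPreservingEquivalent Y := by
  have hYX : (Y * X⁻¹).det = 1 := by
    rw [det_mul, ← h, ← det_mul, mul_nonsing_inv X (Ne.isUnit hX), det_one]
  refine ⟨GeneralLinearGroup.mkOfDetNeZero _ (hYX ▸ one_ne_zero), 1, ?_, ?_⟩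
  · simp [GeneralLinearGroup.mkOfDetNeZero, hYX]
  · simp [GeneralLinearGroup.mkOfDetNeZero, Matrix.mul_assoc, nonsing_inv_mul X (Ne.isUnit hX)]

end DetPreservingEquivalent

end Matrix

theorem norm_preserving_orbits_field_general (F : Type*) [Field F] :
    (∀ X Y : Matrix (Fin 3) (Fin 3) F, X.rank = 1 → Y.rank = 1 →
      ∃ P Q : GL (Fin 3) F,
        ((P : Matrix (Fin 3) (Fin 3) F).det = (Q : Matrix (Fin 3) (Fin 3) F).det) ∧
        (P : Matrix (Fin 3) (Fin 3) F) * X * ((Q⁻¹ : GL (Fin 3) F) : Matrix (Fin 3) (Fin 3) F)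
          = Y) ∧
    (∀ X Y : Matrix (Fin 3) (Fin 3) F, X.rank = 2 → Y.rank = 2 →
      ∃ P Q : GL (Fin 3) F,
        ((P : Matrix (Fin 3) (Fin 3) F).det = (Q : Matrix (Fin 3) (Fin 3) F).det) ∧
        (P : Matrix (Fin 3) (Fin 3) F) * X * ((Q⁻¹ : GL (Fin 3) F) : Matrix (Fin 3) (Fin 3) F)
          = Y) ∧
    (∀ k : F, k ≠ 0 → ∀ X Y : Matrix (Fin 3) (Fin 3) F, X.det = k → Y.det = k →
      ∃ P Q : GL (Fin 3) F,
        ((P : Matrix (Fin 3) (Fin 3) F).det = (Q : Matrix (Fin 3) (Fin 3) F).det) ∧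
        (P : Matrix (Fin 3) (Fin 3) F) * X * ((Q⁻¹ : GL (Fin 3) F) : Matrix (Fin 3) (Fin 3) F)
          = Y) := by
  have singular_orbit (r : ℕ) (hr : r < 3) (X Y : Matrix (Fin 3) (Fin 3) F) (hX : X.rank = r)
      (hY : Y.rank = r) : X.DetPreservingEquivalent Y :=
    .of_rank_eq_of_det_eq_zero (hX.trans hY.symm) (det_eq_zero_of_rank_lt (by simpa [hY]))
  exact ⟨singular_orbit 1 (by norm_num), singular_orbit 2 (by norm_num),
    fun k hk X Y hX hY => DetPreservingEquivalent.of_det_eq (hX.trans hY.symm) (hX ▸ hk)⟩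

/-- **Orbits of the norm-preserving group of `M₃(F)` over a field of characteristic `≠ 2, 3`.**
The norm-preserving group (transformations `X ↦ P·X·Q⁻¹` with `det P = det Q`) acts
transitively on matrices of rank 1, on matrices of rank 2, and, for each `k ≠ 0`,
on matrices of determinant `k`. -/
theorem norm_preserving_orbits_field (F : Type*) [Field F]
    (h2 : (2 : F) ≠ 0) (h3 : (3 : F) ≠ 0) :
    (∀ X Y : Matrix (Fin 3) (Fin 3) F, X.rank = 1 → Y.rank = 1 →
      ∃ P Q : GL (Fin 3) F,
        ((P : Matrix (Fin 3) (Fin 3) F).det = (Q : Matrix (Fin 3) (Fin 3) F).det) ∧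
        (P : Matrix (Fin 3) (Fin 3) F) * X * ((Q⁻¹ : GL (Fin 3) F) : Matrix (Fin 3) (Fin 3) F)
          = Y) ∧
    (∀ X Y : Matrix (Fin 3) (Fin 3) F, X.rank = 2 → Y.rank = 2 →
      ∃ P Q : GL (Fin 3) F,
        ((P : Matrix (Fin 3) (Fin 3) F).det = (Q : Matrix (Fin 3) (Fin 3) F).det) ∧
        (P : Matrix (Fin 3) (Fin 3) F) * X * ((Q⁻¹ : GL (Fin 3) F) : Matrix (Fin 3) (Fin 3) F)
          = Y) ∧
    (∀ k : F, k ≠ 0 → ∀ X Y : Matrix (Fin 3) (Fin 3) F, X.det = k → Y.det = k →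
      ∃ P Q : GL (Fin 3) F,
        ((P : Matrix (Fin 3) (Fin 3) F).det = (Q : Matrix (Fin 3) (Fin 3) F).det) ∧
        (P : Matrix (Fin 3) (Fin 3) F) * X * ((Q⁻¹ : GL (Fin 3) F) : Matrix (Fin 3) (Fin 3) F)
          = Y) :=
  norm_preserving_orbits_field_general F
end

section
/- Let F be a field with char(F) ≠ 2 and char(F) ≠ 3 in which every element is a square. Then for symmetric matrices X, Y ∈ M₃(F): (1) if X and Y both have matrix rank 1, there exist γ ∈ F and A ∈ GL₃(F) with γ³·(det A)² = 1 and γ·A·X·Aᵀ = Y; (2) the same holds if X and Y both have matrix rank 2; (3) for each k ≠ 0, the same holds if det(X) = det(Y) = k. -/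
/-!
Over a field of characteristic `≠ 2` every symmetric matrix is congruent to a diagonal one
(an orthogonal basis for its bilinear form), and when every element is a square the diagonal
entries can be rescaled to `0` and `1`. Up to a permutation of coordinates this normal form
only depends on the rank, so symmetric matrices of equal rank are congruent, and the
norm-preserving map `X ↦ A X Aᵀ` (with `γ = 1`) only needs `(det A)² = 1`. For
`det X = det Y ≠ 0` this is forced by taking determinants. In the singular case the normal
form has a zero diagonal entry, and scaling that coordinate is a congruence fixing the normal
form with arbitrary determinant, which corrects `det A` to `1`.
-/

open Matrix

theorem Finset.exists_perm_mem_iff_of_card_eq {n : Type*} [Fintype n] [DecidableEq n]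
    {s t : Finset n} (h : s.card = t.card) : ∃ σ : Equiv.Perm n, ∀ i, σ i ∈ s ↔ i ∈ t := by
  have hin : Fintype.card {i // i ∈ t} = Fintype.card {i // i ∈ s} := by simp [h]
  have hout : Fintype.card {i // i ∉ t} = Fintype.card {i // i ∉ s} := by
    rw [Fintype.card_subtype_compl, Fintype.card_subtype_compl, hin]
  refine ⟨Equiv.subtypeCongr (Fintype.equivOfCardEq hin) (Fintype.equivOfCardEq hout),
    fun i => ?_⟩
  by_cases hi : i ∈ t
  · simp [Equiv.subtypeCongr, hi]
  · simpa [Equiv.subtypeCongr, hi] using ((Fintype.equivOfCardEq hout) ⟨i, hi⟩).2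

namespace Matrix

variable {n R K : Type*} [Fintype n]

theorem mul_mul_mul_transpose_mul [CommSemiring R] (A B X : Matrix n n R) :
    B * A * X * (B * A)ᵀ = B * (A * X * Aᵀ) * Bᵀ := by
  simp only [transpose_mul, Matrix.mul_assoc]

variable [DecidableEq n]

theorem diagonal_mul_diagonal_mul_transpose [CommSemiring R] (c d : n → R) :
    diagonal c * diagonal d * (diagonal c)ᵀ = diagonal fun i => c i ^ 2 * d i := by
  simp only [diagonal_transpose, diagonal_mul_diagonal]
  congr 1
  ext i
  ring

section CommRing

variable [CommRing R]

def Congruent (X Y : Matrix n n R) : Prop :=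
  ∃ A : GL n R, (A : Matrix n n R) * X * (A : Matrix n n R)ᵀ = Y

namespace Congruent

variable {X Y Z : Matrix n n R}

theorem symm : Congruent X Y → Congruent Y X := by
  rintro ⟨A, rfl⟩
  refine ⟨A⁻¹, ?_⟩
  rw [← mul_mul_mul_transpose_mul, Units.inv_mul, Matrix.one_mul, transpose_one, Matrix.mul_one]

theorem trans : Congruent X Y → Congruent Y Z → Congruent X Z := by
  rintro ⟨A, rfl⟩ ⟨B, rfl⟩
  exact ⟨B * A, by rw [Units.val_mul, mul_mul_mul_transpose_mul]⟩

theorem rank_eq : Congruent X Y → X.rank = Y.rank := by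
  rintro ⟨A, rfl⟩
  rw [rank_mul_eq_left_of_isUnit_det _ _ (isUnit_det_transpose _ (isUnits_det_units A)),
    rank_mul_eq_right_of_isUnit_det _ _ (isUnits_det_units A)]

end Congruent

theorem congruent_submatrix (X : Matrix n n R) (σ : Equiv.Perm n) :
    Congruent X (X.submatrix σ σ) := by
  refine ⟨GeneralLinearGroup.mk'' (σ.permMatrix R) ?_, ?_⟩
  · rw [det_permutation]
    exact σ.sign.isUnit.map (Int.castRingHom R)
  · rw [GeneralLinearGroup.val_mk'', transpose_permMatrix, PEquiv.toMatrix_toPEquiv_mul,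
      PEquiv.mul_toMatrix_toPEquiv]
    rfl

end CommRing

section Field

variable [Field K]

theorem exists_congruent_diagonal_of_isSymm (h2 : (2 : K) ≠ 0) {X : Matrix n n K}
    (hX : X.IsSymm) : ∃ d : n → K, Congruent X (diagonal d) := by
  have : Invertible (2 : K) := invertibleOfNonzero h2
  obtain ⟨v₀, hv₀⟩ := LinearMap.BilinForm.exists_orthogonal_basis
    (LinearMap.BilinForm.isSymm_iff.1 (isSymm_toBilin'_iff_isSymm.2 hX))
  let v : Module.Basis n K (n → K) := v₀.reindex (Fintype.equivOfCardEq (by simp))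
  have hv : (toBilin' X).IsOrthoᵢ v := fun i j hij => by
    simp only [v, Module.Basis.coe_reindex]
    exact hv₀ ((Equiv.injective _).ne hij)
  let b := Pi.basisFun K n
  have := b.invertibleToMatrix v
  refine ⟨fun i => toBilin' X (v i) (v i), unitOfInvertible (b.toMatrix v)ᵀ, ?_⟩
  change (b.toMatrix v)ᵀ * X * (b.toMatrix v)ᵀᵀ = _
  conv_lhs => rw [← LinearMap.BilinForm.toMatrix'_toBilin' X,
    ← LinearMap.BilinForm.toMatrix_basisFun]
  rw [transpose_transpose, LinearMap.BilinForm.toMatrix_mul_basis_toMatrix]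
  ext i j
  rw [LinearMap.BilinForm.toMatrix_apply, diagonal_apply]
  split_ifs with hij
  · rw [hij]
  · exact hv hij

theorem congruent_diagonal_mul_sq (d c : n → K) (hc : ∀ i, c i ≠ 0) :
    Congruent (diagonal d) (diagonal fun i => c i ^ 2 * d i) :=
  ⟨.mkOfDetNeZero (diagonal c) (by simpa [det_diagonal, Finset.prod_ne_zero_iff] using hc),
    diagonal_mul_diagonal_mul_transpose c d⟩

theorem rank_diagonal_indicator (s : Finset n) :
    (diagonal fun i => if i ∈ s then (1 : K) else 0).rank = s.card := by
  classical
  rw [rank_diagonal, Fintype.card_subtype]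
  simp

theorem exists_stabilizer_diagonal_indicator_det_eq {s : Finset n} {i₀ : n} (hi₀ : i₀ ∉ s)
    {u : K} (hu : u ≠ 0) :
    ∃ P : GL n K, (P : Matrix n n K).det = u ∧
      (P : Matrix n n K) * (diagonal fun i => if i ∈ s then 1 else 0) * (P : Matrix n n K)ᵀ =
        diagonal fun i => if i ∈ s then 1 else 0 := by
  let c := Function.update (fun _ => (1 : K)) i₀ u
  have hc : ∀ i, c i ≠ 0 := fun i => by
    by_cases hi : i = i₀
    · simp [c, hi, hu]
    · simp [c, hi]
  refine ⟨.mkOfDetNeZero (diagonal c) (by simpa [det_diagonal, Finset.prod_ne_zero_iff] using hc),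
    ?_, ?_⟩
  · simp [c, det_diagonal, Finset.prod_update_of_mem]
  · rw [GeneralLinearGroup.val_mkOfDetNeZero, diagonal_mul_diagonal_mul_transpose]
    congr 1
    ext i
    by_cases hi : i = i₀
    · simp [hi, hi₀]
    · simp [c, hi]

theorem det_sq_eq_one_of_mul_mul_transpose_eq {A X Y : Matrix n n K} (hA : A * X * Aᵀ = Y)
    (hdet : X.det = Y.det) (hX : X.det ≠ 0) : A.det ^ 2 = 1 := by
  have hdetA : A.det * X.det * A.det = X.det := by
    simpa only [det_mul, det_transpose, ← hdet] using congrArg det hA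
  exact mul_right_cancel₀ hX (by linear_combination hdetA)

variable (h2 : (2 : K) ≠ 0) (hsq : ∀ a : K, ∃ b, b ^ 2 = a)
include h2 hsq

theorem exists_congruent_diagonal_indicator {X : Matrix n n K} (hX : X.IsSymm) :
    ∃ s : Finset n, Congruent X (diagonal fun i => if i ∈ s then 1 else 0) := by
  classical
  obtain ⟨d, hd⟩ := exists_congruent_diagonal_of_isSymm h2 hX
  choose b hb using fun i => hsq (d i)⁻¹
  let c i := if d i = 0 then 1 else b i
  have hc : ∀ i, c i ≠ 0 := fun i => by
    by_cases hi : d i = 0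
    · simp [c, hi]
    · have : b i ^ 2 ≠ 0 := (hb i).symm ▸ inv_ne_zero hi
      simpa [c, hi] using this
  refine ⟨Finset.univ.filter (d · ≠ 0), hd.trans ?_⟩
  convert congruent_diagonal_mul_sq d c hc using 2
  ext i
  by_cases hi : d i = 0
  · simp [hi]
  · simp [c, hi, hb]

theorem congruent_of_rank_eq {X Y : Matrix n n K} (hX : X.IsSymm) (hY : Y.IsSymm)
    (h : X.rank = Y.rank) : Congruent X Y := by
  obtain ⟨s, hXs⟩ := exists_congruent_diagonal_indicator h2 hsq hX
  obtain ⟨t, hYt⟩ := exists_congruent_diagonal_indicator h2 hsq hY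
  obtain ⟨σ, hσ⟩ := Finset.exists_perm_mem_iff_of_card_eq (s := s) (t := t) (by
    rw [← rank_diagonal_indicator (K := K), ← rank_diagonal_indicator (K := K), ← hXs.rank_eq,
      ← hYt.rank_eq, h])
  refine (hXs.trans ?_).trans hYt.symm
  convert congruent_submatrix _ σ using 1
  simp [submatrix_diagonal_equiv, hσ]

theorem exists_det_eq_one_of_rank_eq {X Y : Matrix n n K} (hX : X.IsSymm) (hY : Y.IsSymm)
    (h : X.rank = Y.rank) (hlt : X.rank < Fintype.card n) :
    ∃ A : GL n K, (A : Matrix n n K).det = 1 ∧ A * X * (A : Matrix n n K)ᵀ = Y := by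
  obtain ⟨s, hXs⟩ := exists_congruent_diagonal_indicator h2 hsq hX
  obtain ⟨i₀, -, hi₀⟩ : ∃ i₀ ∈ Finset.univ, i₀ ∉ s := by
    refine Finset.exists_mem_notMem_of_card_lt_card ?_
    rwa [Finset.card_univ, ← rank_diagonal_indicator (K := K), ← hXs.rank_eq]
  obtain ⟨A₂, hA₂⟩ := hXs.symm.trans (congruent_of_rank_eq h2 hsq hX hY h)
  obtain ⟨A₁, hA₁⟩ := hXs
  -- pass through the normal form, fixing it by a congruence that corrects the determinant
  obtain ⟨P, hPdet, hP⟩ := exists_stabilizer_diagonal_indicator_det_eq (K := K) hi₀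
    (inv_ne_zero (isUnits_det_units (A₂ * A₁)).ne_zero)
  refine ⟨A₂ * P * A₁, ?_, ?_⟩
  · rw [Units.val_mul, Units.val_mul, det_mul, det_mul, mul_right_comm, hPdet, ← det_mul,
      ← Units.val_mul, mul_inv_cancel₀ (isUnits_det_units _).ne_zero]
  · rw [Units.val_mul, Units.val_mul, mul_mul_mul_transpose_mul, mul_mul_mul_transpose_mul, hA₁,
      hP, hA₂]

end Field

end Matrix

theorem norm_preserving_orbits_symmetric_general (F : Type*) [Field F]
    (h2 : (2 : F) ≠ 0) (hsq : ∀ a : F, ∃ b : F, b ^ 2 = a) :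
    (∀ X Y : Matrix (Fin 3) (Fin 3) F, X.IsSymm → Y.IsSymm → X.rank = 1 → Y.rank = 1 →
      ∃ (γ : F) (A : GL (Fin 3) F),
        γ ^ 3 * (A : Matrix (Fin 3) (Fin 3) F).det ^ 2 = 1 ∧
        γ • ((A : Matrix (Fin 3) (Fin 3) F) * X * (A : Matrix (Fin 3) (Fin 3) F)ᵀ) = Y) ∧
    (∀ X Y : Matrix (Fin 3) (Fin 3) F, X.IsSymm → Y.IsSymm → X.rank = 2 → Y.rank = 2 →
      ∃ (γ : F) (A : GL (Fin 3) F),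
        γ ^ 3 * (A : Matrix (Fin 3) (Fin 3) F).det ^ 2 = 1 ∧
        γ • ((A : Matrix (Fin 3) (Fin 3) F) * X * (A : Matrix (Fin 3) (Fin 3) F)ᵀ) = Y) ∧
    (∀ k : F, k ≠ 0 →
      ∀ X Y : Matrix (Fin 3) (Fin 3) F, X.IsSymm → Y.IsSymm → X.det = k → Y.det = k →
      ∃ (γ : F) (A : GL (Fin 3) F),
        γ ^ 3 * (A : Matrix (Fin 3) (Fin 3) F).det ^ 2 = 1 ∧
        γ • ((A : Matrix (Fin 3) (Fin 3) F) * X * (A : Matrix (Fin 3) (Fin 3) F)ᵀ) = Y) := by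
  have with_one : ∀ {X Y : Matrix (Fin 3) (Fin 3) F} (A : GL (Fin 3) F),
      (A : Matrix (Fin 3) (Fin 3) F).det ^ 2 = 1 → A * X * (A : Matrix (Fin 3) (Fin 3) F)ᵀ = Y →
      ∃ (γ : F) (A : GL (Fin 3) F), γ ^ 3 * (A : Matrix (Fin 3) (Fin 3) F).det ^ 2 = 1 ∧
        γ • ((A : Matrix (Fin 3) (Fin 3) F) * X * (A : Matrix (Fin 3) (Fin 3) F)ᵀ) = Y :=
    fun A hA hAXY => ⟨1, A, by rw [hA, one_pow, one_mul], by rw [one_smul, hAXY]⟩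
  refine ⟨fun X Y hX hY hX1 hY1 => ?_, fun X Y hX hY hX2 hY2 => ?_,
    fun k hk X Y hX hY hXk hYk => ?_⟩
  · obtain ⟨A, hA, hAXY⟩ := exists_det_eq_one_of_rank_eq h2 hsq hX hY (hX1.trans hY1.symm)
      (by simp [hX1])
    exact with_one A (by rw [hA, one_pow]) hAXY
  · obtain ⟨A, hA, hAXY⟩ := exists_det_eq_one_of_rank_eq h2 hsq hX hY (hX2.trans hY2.symm)
      (by simp [hX2])
    exact with_one A (by rw [hA, one_pow]) hAXY
  · have full_rank : ∀ Z : Matrix (Fin 3) (Fin 3) F, Z.det = k → Z.rank = 3 := fun Z hZ =>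
      (Z.rank_of_isUnit ((isUnit_iff_isUnit_det Z).2 (hZ ▸ hk.isUnit))).trans (Fintype.card_fin 3)
    obtain ⟨A, hAXY⟩ :=
      congruent_of_rank_eq h2 hsq hX hY (by rw [full_rank X hXk, full_rank Y hYk])
    exact with_one A (det_sq_eq_one_of_mul_mul_transpose_eq hAXY (hXk.trans hYk.symm) (hXk ▸ hk))
      hAXY

/-- **Orbits of the norm-preserving group of `H₃(F)` (symmetric 3×3 matrices) over a field
of characteristic `≠ 2, 3` in which every element is a square.**
The norm-preserving group (transformations `X ↦ γ·A·X·Aᵀ` with `γ³·(det A)² = 1`) acts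
transitively on symmetric matrices of rank 1, on symmetric matrices of rank 2, and, for
each `k ≠ 0`, on symmetric matrices of determinant `k`. -/
theorem norm_preserving_orbits_symmetric (F : Type*) [Field F]
    (h2 : (2 : F) ≠ 0) (h3 : (3 : F) ≠ 0) (hsq : ∀ a : F, ∃ b : F, b ^ 2 = a) :
    (∀ X Y : Matrix (Fin 3) (Fin 3) F, X.IsSymm → Y.IsSymm → X.rank = 1 → Y.rank = 1 →
      ∃ (γ : F) (A : GL (Fin 3) F),
        γ ^ 3 * (A : Matrix (Fin 3) (Fin 3) F).det ^ 2 = 1 ∧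
        γ • ((A : Matrix (Fin 3) (Fin 3) F) * X * (A : Matrix (Fin 3) (Fin 3) F)ᵀ) = Y) ∧
    (∀ X Y : Matrix (Fin 3) (Fin 3) F, X.IsSymm → Y.IsSymm → X.rank = 2 → Y.rank = 2 →
      ∃ (γ : F) (A : GL (Fin 3) F),
        γ ^ 3 * (A : Matrix (Fin 3) (Fin 3) F).det ^ 2 = 1 ∧
        γ • ((A : Matrix (Fin 3) (Fin 3) F) * X * (A : Matrix (Fin 3) (Fin 3) F)ᵀ) = Y) ∧
    (∀ k : F, k ≠ 0 →
      ∀ X Y : Matrix (Fin 3) (Fin 3) F, X.IsSymm → Y.IsSymm → X.det = k → Y.det = k →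
      ∃ (γ : F) (A : GL (Fin 3) F),
        γ ^ 3 * (A : Matrix (Fin 3) (Fin 3) F).det ^ 2 = 1 ∧
        γ • ((A : Matrix (Fin 3) (Fin 3) F) * X * (A : Matrix (Fin 3) (Fin 3) F)ᵀ) = Y) :=
  norm_preserving_orbits_symmetric_general F h2 hsq
end

section
/- Let x = (α, β, diag(a₁,a₂,a₃), 0) ∈ M with α ≠ 0. For every c ∈ F there exists g in the subgroup of G(M) generated by the transformations φ(C) and ψ(D) (C, D ∈ J) such that g(x) = (α, β − 2(a₁a₂/α)c, diag(a₁, a₂, a₃ + βc − (a₁a₂/α)c²), 0). -/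
open Matrix

namespace Freudenthal

variable (F : Type*) [Field F]

/-- The cubic Jordan algebra `J = M₃(F)`. -/
abbrev Mat := Matrix (Fin 3) (Fin 3) F

/-- The trace bilinear form `(A, B) = tr(A·B)` on `J`. -/
def tb (A B : Mat F) : F := (A * B).trace

/-- The Freudenthal cross product `A × B = (A+B)# − A# − B#` (adjoint = adjugate). -/
def cross (A B : Mat F) : Mat F := (A + B).adjugate - A.adjugate - B.adjugate

/-- The Freudenthal module `M = F ⊕ F ⊕ J ⊕ J`, elements `(α, β, A, B)`. -/
abbrev FM := F × F × Mat F × Mat F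

/-- The elementary transformation
`φ(C) : (α,β,A,B) ↦ (α + (B,C) + (A,C#) + β·det C, β, A + βC, B + A×C + βC#)`. -/
def phiMap (C : Mat F) (x : FM F) : FM F :=
  (x.1 + tb F x.2.2.2 C + tb F x.2.2.1 C.adjugate + x.2.1 * C.det,
   x.2.1,
   x.2.2.1 + x.2.1 • C,
   x.2.2.2 + cross F x.2.2.1 C + x.2.1 • C.adjugate)

/-- The elementary transformation
`ψ(D) : (α,β,A,B) ↦ (α, β + (A,D) + (B,D#) + α·det D, A + B×D + αD#, B + αD)`. -/
def psiMap (D : Mat F) (x : FM F) : FM F :=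
  (x.1,
   x.2.1 + tb F x.2.2.1 D + tb F x.2.2.2 D.adjugate + x.1 * D.det,
   x.2.2.1 + cross F x.2.2.2 D + x.1 • D.adjugate,
   x.2.2.2 + x.1 • D)

/-- The subgroup of `G(M)` generated by the transformations `φ(C)` and `ψ(D)`
(`C, D ∈ J`): predicate for being a finite product of such transformations. -/
inductive PhiPsiWord : (FM F → FM F) → Prop
  | phi (C : Mat F) : PhiPsiWord (phiMap F C)
  | psi (D : Mat F) : PhiPsiWord (psiMap F D)
  | comp {g h : FM F → FM F} : PhiPsiWord g → PhiPsiWord h → PhiPsiWord (g ∘ h)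

end Freudenthal

open Freudenthal

/-! The witness is `ψ(−B/α) ∘ φ(c·E₃₃)`. As `(c·E₃₃)# = 0`, the map `φ(c·E₃₃)` only shifts `a₃`
by `βc` and creates `B = A × c·E₃₃ = diag(a₂c, a₁c, 0)`. Then `ψ(−B/α)` clears `B` again; by
`B × B = 2B#` and `(B, B#) = 3 det B` it changes `β` by `−(A, B)/α + 2 det B/α²` and `A` by
`−B#/α`, which for this `B` are exactly the shifts in the statement. -/

theorem Matrix.det_eq_zero_of_adjugate_eq_zero {n R : Type*} [Fintype n] [DecidableEq n]
    [Nonempty n] [CommRing R] {A : Matrix n n R} (h : A.adjugate = 0) : A.det = 0 := by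
  have := congr_fun₂ A.mul_adjugate (Classical.arbitrary n) (Classical.arbitrary n)
  simpa [h] using this.symm

namespace Freudenthal

variable {F : Type*} [Field F]

theorem tb_smul_right (r : F) (A B : Mat F) : tb F A (r • B) = r * tb F A B := by
  simp [tb, Matrix.trace_smul]

theorem tb_self_adjugate (B : Mat F) : tb F B B.adjugate = 3 * B.det := by
  simp [tb, Matrix.mul_adjugate, mul_comm]

theorem cross_self_smul (r : F) (B : Mat F) : cross F B (r • B) = (2 * r) • B.adjugate := by
  have h : B + r • B = (1 + r) • B := by rw [add_smul, one_smul]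
  simp only [cross, h, Matrix.adjugate_smul, Fintype.card_fin]
  module

theorem phiMap_of_adjugate_eq_zero {C : Mat F} (hC : C.adjugate = 0) (α β : F) (A : Mat F) :
    phiMap F C (α, β, A, 0) = (α, β, A + β • C, cross F A C) := by
  simp [phiMap, tb, hC, Matrix.det_eq_zero_of_adjugate_eq_zero hC]

theorem psiMap_neg_inv_smul_self {α : F} (hα : α ≠ 0) (β : F) (A B : Mat F) :
    psiMap F (-α⁻¹ • B) (α, β, A, B) =
      (α, β - α⁻¹ * tb F A B + 2 * α⁻¹ ^ 2 * B.det, A - α⁻¹ • B.adjugate, 0) := by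
  simp only [psiMap, tb_smul_right, cross_self_smul, Matrix.adjugate_smul, Matrix.det_smul,
    Fintype.card_fin, Nat.reduceSub, tb_self_adjugate, smul_smul, Prod.mk.injEq, true_and]
  refine ⟨?_, ?_, ?_⟩
  · field_simp
    ring
  · rw [add_assoc, ← add_smul, sub_eq_add_neg, ← neg_smul]
    congr 2
    field_simp
    ring
  · simp [hα]

theorem adjugate_diagonal_fin_three (x y z : F) :
    (diagonal ![x, y, z]).adjugate = diagonal ![y * z, x * z, x * y] := by
  rw [adjugate_fin_three]
  ext i j
  fin_cases i <;> fin_cases j <;> simp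

theorem cross_diagonal_fin_three (x y z u v w : F) :
    cross F (diagonal ![x, y, z]) (diagonal ![u, v, w]) =
      diagonal ![y * w + v * z, x * w + u * z, x * v + u * y] := by
  rw [cross, adjugate_fin_three, adjugate_fin_three, adjugate_fin_three]
  ext i j
  fin_cases i <;> fin_cases j <;> simp <;> ring

theorem tb_diagonal_fin_three (x y z u v w : F) :
    tb F (diagonal ![x, y, z]) (diagonal ![u, v, w]) = x * u + y * v + z * w := by
  simp [tb, Fin.sum_univ_three]

end Freudenthal

theorem diagonal_reduction_step_general (F : Type*) [Field F]
    (α β a₁ a₂ a₃ c : F) (hα : α ≠ 0) :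
    ∃ g : FM F → FM F, PhiPsiWord F g ∧
      g (α, β, Matrix.diagonal ![a₁, a₂, a₃], 0)
        = (α, β - 2 * (a₁ * a₂ / α) * c,
           Matrix.diagonal ![a₁, a₂, a₃ + β * c - (a₁ * a₂ / α) * c ^ 2], 0) := by
  set B : Mat F := diagonal ![a₂ * c, a₁ * c, 0]
  have hφ : phiMap F (diagonal ![0, 0, c]) (α, β, diagonal ![a₁, a₂, a₃], 0) =
      (α, β, diagonal ![a₁, a₂, a₃ + β * c], B) := by
    rw [phiMap_of_adjugate_eq_zero (by rw [adjugate_diagonal_fin_three]; simp),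
      cross_diagonal_fin_three]
    simp [B, ← diagonal_smul, diagonal_add, Fin.forall_fin_succ]
  refine ⟨psiMap F (-α⁻¹ • B) ∘ phiMap F (diagonal ![0, 0, c]), .comp (.psi _) (.phi _), ?_⟩
  rw [Function.comp_apply, hφ, psiMap_neg_inv_smul_self hα, tb_diagonal_fin_three,
    adjugate_diagonal_fin_three, det_diagonal, Fin.prod_univ_three]
  simp [← diagonal_smul, diagonal_sub, Fin.forall_fin_succ]
  constructor <;> ring

/-- **Key computation (Lemma on diagonal reduction).**
The element `(α, β, diag(a₁,a₂,a₃), 0)` with `α ≠ 0` can be mapped, by a product of the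
transformations `φ(C)` and `ψ(D)`, to
`(α, β − 2(a₁a₂/α)c, diag(a₁, a₂, a₃ + βc − (a₁a₂/α)c²), 0)` for any `c ∈ F`. -/
theorem diagonal_reduction_step (F : Type*) [Field F] (h2 : (2 : F) ≠ 0) (h3 : (3 : F) ≠ 0)
    (α β a₁ a₂ a₃ c : F) (hα : α ≠ 0) :
    ∃ g : FM F → FM F, PhiPsiWord F g ∧
      g (α, β, Matrix.diagonal ![a₁, a₂, a₃], 0)
        = (α, β - 2 * (a₁ * a₂ / α) * c,
           Matrix.diagonal ![a₁, a₂, a₃ + β * c - (a₁ * a₂ / α) * c ^ 2], 0) :=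
  diagonal_reduction_step_general F α β a₁ a₂ a₃ c hα
end

section
/- For every x ∈ M_ℤ, the value q'(x) is congruent to 0 or 1 modulo 4. -/
open Matrix

namespace FreudenthalZ

/-- The integral cubic Jordan algebra `J_ℤ = M₃(ℤ)`. -/
abbrev MatZ := Matrix (Fin 3) (Fin 3) ℤ

/-- The trace bilinear form `(A, B) = tr(A·B)`. -/
def tb (A B : MatZ) : ℤ := (A * B).trace

/-- The integral Freudenthal module `M_ℤ = ℤ ⊕ ℤ ⊕ J_ℤ ⊕ J_ℤ`. -/
abbrev MZ := ℤ × ℤ × MatZ × MatZ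

/-- The quartic norm `q'(x) = ((A,B) − αβ)² − 4(A#,B#) + 4α·det A + 4β·det B`. -/
def qz (x : MZ) : ℤ :=
  (tb x.2.2.1 x.2.2.2 - x.1 * x.2.1) ^ 2 - 4 * tb x.2.2.1.adjugate x.2.2.2.adjugate
    + 4 * x.1 * x.2.2.1.det + 4 * x.2.1 * x.2.2.2.det

end FreudenthalZ

open FreudenthalZ

/-- **Values of the quartic norm on `M_ℤ`** are congruent to `0` or `1` modulo `4`. -/
theorem quartic_norm_mod_four (x : MZ) : qz x % 4 = 0 ∨ qz x % 4 = 1 := by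
  unfold qz
  set s : ℤ := tb x.2.2.1 x.2.2.2 - x.1 * x.2.1 with hs
  set a : ℤ := tb x.2.2.1.adjugate x.2.2.2.adjugate
  set b : ℤ := x.2.2.1.det
  set c : ℤ := x.2.2.2.det
  rcases Int.even_or_odd s with ⟨k, hk⟩ | ⟨k, hk⟩ <;> rw [hk]
  · rw [show (k + k) ^ 2 - 4 * a + 4 * x.1 * b + 4 * x.2.1 * c
        = 4 * (k * k - a + x.1 * b + x.2.1 * c) from by ring]
    omega
  · rw [show (2 * k + 1) ^ 2 - 4 * a + 4 * x.1 * b + 4 * x.2.1 * c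
        = 4 * (k * k + k - a + x.1 * b + x.2.1 * c) + 1 from by ring]
    omega
end

section
/- (Reduction Lemma I) Every nonzero element x ∈ M_ℤ is equivalent to a diagonal reduced element under a product of elementary transformations: there exists g in the subgroup generated by {φ(C), ψ(D), τ : C, D ∈ J_ℤ} ∪ {T(P,Q) : P, Q ∈ GL₃(ℤ), det(P) = det(Q)} ∪ {T(t)} such that g(x) is diagonal reduced. -/
/-!
Among the elements reachable from `x`, take one whose first coordinate `α` is positive and
minimal. To show `α ∣ c` it suffices to reach first coordinate `c + α k` for every `k`: with
`k = -(c / α)` this is the remainder `c % α`, which must then vanish. Composing `ψ` of a multiple of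
`e_ij` with `φ(e_ji)` shows `α ∣ B`, so `ψ(-B/α)` kills `B`. Next `T(P, Q)` with `P, Q ∈ SL₃(ℤ)`
diagonalizes `A` without changing `α`; such `P, Q` exist because every integer matrix is
diagonalized by row and column transvections (the same remainder argument, applied to the
smallest nonzero pivot). Finally `τ` followed by `φ(C)` for suitable `C` shows `α ∣ β` and `α`
divides the diagonal entries.
-/

open Matrix

namespace FreudenthalZ

/-- The Freudenthal cross product `A × B = (A+B)# − A# − B#` (adjoint = adjugate). -/
def cross (A B : MatZ) : MatZ := (A + B).adjugate - A.adjugate - B.adjugate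

/-- The symplectic form `{x, y} = αδ − βγ + (A,D) − (B,C)`. -/
def symp (x y : MZ) : ℤ :=
  x.1 * y.2.1 - x.2.1 * y.1 + tb x.2.2.1 y.2.2.2 - tb x.2.2.2 y.2.2.1

/-- Membership in the group `G_ℤ`: `ℤ`-linear automorphisms of `M_ℤ`
preserving the quartic norm `q'` and the symplectic form `{·,·}`. -/
def InG (g : MZ → MZ) : Prop :=
  IsLinearMap ℤ g ∧ Function.Bijective g ∧
    (∀ x, qz (g x) = qz x) ∧ (∀ x y, symp (g x) (g y) = symp x y)

/-- `x` is projective: some `g ∈ G_ℤ` maps `x` to a diagonal reduced element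
`(α, β, diag(a₁,a₂,a₃), 0)` (`α > 0`, `α ∣ β`, `α ∣ aᵢ`) satisfying the three gcd
conditions `gcd(α·aᵢ, α·β, aⱼ·a_k) = 1`. -/
def Projective (x : MZ) : Prop :=
  ∃ g : MZ → MZ, InG g ∧ ∃ α β a₁ a₂ a₃ : ℤ,
    g x = (α, β, Matrix.diagonal ![a₁, a₂, a₃], 0) ∧
    0 < α ∧ α ∣ β ∧ α ∣ a₁ ∧ α ∣ a₂ ∧ α ∣ a₃ ∧
    Int.gcd (Int.gcd (α * a₁) (α * β)) (a₂ * a₃) = 1 ∧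
    Int.gcd (Int.gcd (α * a₂) (α * β)) (a₃ * a₁) = 1 ∧
    Int.gcd (Int.gcd (α * a₃) (α * β)) (a₁ * a₂) = 1

end FreudenthalZ

open FreudenthalZ

namespace FreudenthalZ

/-- The elementary transformation
`φ(C) : (α,β,A,B) ↦ (α + (B,C) + (A,C#) + β·det C, β, A + βC, B + A×C + βC#)`. -/
def phiMap (C : MatZ) (x : MZ) : MZ :=
  (x.1 + tb x.2.2.2 C + tb x.2.2.1 C.adjugate + x.2.1 * C.det,
   x.2.1,
   x.2.2.1 + x.2.1 • C,
   x.2.2.2 + cross x.2.2.1 C + x.2.1 • C.adjugate)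

/-- The elementary transformation
`ψ(D) : (α,β,A,B) ↦ (α, β + (A,D) + (B,D#) + α·det D, A + B×D + αD#, B + αD)`. -/
def psiMap (D : MatZ) (x : MZ) : MZ :=
  (x.1,
   x.2.1 + tb x.2.2.1 D + tb x.2.2.2 D.adjugate + x.1 * D.det,
   x.2.2.1 + cross x.2.2.2 D + x.1 • D.adjugate,
   x.2.2.2 + x.1 • D)

/-- The elementary transformation `τ : (α,β,A,B) ↦ (−β, α, −B, A)`. -/
def tauMap (x : MZ) : MZ := (-x.2.1, x.1, -x.2.2.2, x.2.2.1)

/-- The elementary transformation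
`T(P,Q) : (α,β,A,B) ↦ (ε·α, ε·β, P A Q⁻¹, Q B P⁻¹)` with `ε = det P · det Q`. -/
def Tmap (P Q : GL (Fin 3) ℤ) (x : MZ) : MZ :=
  ((P : MatZ).det * (Q : MatZ).det * x.1,
   (P : MatZ).det * (Q : MatZ).det * x.2.1,
   (P : MatZ) * x.2.2.1 * ((Q⁻¹ : GL (Fin 3) ℤ) : MatZ),
   (Q : MatZ) * x.2.2.2 * ((P⁻¹ : GL (Fin 3) ℤ) : MatZ))

/-- The elementary transformation `T(t) : (α,β,A,B) ↦ (α, β, Aᵀ, Bᵀ)`. -/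
def Ttr (x : MZ) : MZ := (x.1, x.2.1, x.2.2.1ᵀ, x.2.2.2ᵀ)

/-- An element of `M_ℤ` is diagonal reduced if it has the form
`(α, β, diag(a₁,a₂,a₃), 0)` with `α > 0`, `α ∣ β` and `α ∣ aᵢ`. -/
def DiagReduced (x : MZ) : Prop :=
  ∃ α β a₁ a₂ a₃ : ℤ, x = (α, β, Matrix.diagonal ![a₁, a₂, a₃], 0) ∧
    0 < α ∧ α ∣ β ∧ α ∣ a₁ ∧ α ∣ a₂ ∧ α ∣ a₃

/-- Finite products of the elementary transformations `φ(C)`, `ψ(D)`, `τ`,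
`T(P,Q)` (with `det P = det Q`) and `T(t)`. -/
inductive ZWord : (MZ → MZ) → Prop
  | phi (C : MatZ) : ZWord (phiMap C)
  | psi (D : MatZ) : ZWord (psiMap D)
  | tau : ZWord tauMap
  | tmap (P Q : GL (Fin 3) ℤ) (h : (P : MatZ).det = (Q : MatZ).det) : ZWord (Tmap P Q)
  | ttr : ZWord Ttr
  | comp {g h : MZ → MZ} : ZWord g → ZWord h → ZWord (g ∘ h)

end FreudenthalZ

lemma Int.natAbs_emod_lt_natAbs (c : ℤ) {a : ℤ} (ha : a ≠ 0) : (c % a).natAbs < a.natAbs := by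
  have := Int.emod_nonneg c ha
  have := Int.emod_lt c ha
  omega

namespace Matrix

variable {n : Type*} [Fintype n] [DecidableEq n]

def TransvectionStep (S : Finset n) (A B : Matrix n n ℤ) : Prop :=
  ∃ i ∈ S, ∃ j ∈ S, i ≠ j ∧ ∃ c : ℤ, B = transvection i j c * A ∨ B = A * transvection i j c

abbrev TransvectionReach (S : Finset n) : Matrix n n ℤ → Matrix n n ℤ → Prop :=
  Relation.ReflTransGen (TransvectionStep S)

def IsDiagOutside (S : Finset n) (A : Matrix n n ℤ) : Prop :=
  ∀ i j, i ≠ j → (i ∉ S ∨ j ∉ S) → A i j = 0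

namespace TransvectionReach

variable {S : Finset n} {A B : Matrix n n ℤ} {i j : n}

lemma mul_left (h : TransvectionReach S A B) (hi : i ∈ S) (hj : j ∈ S) (hij : i ≠ j) (c : ℤ) :
    TransvectionReach S A (transvection i j c * B) :=
  h.tail ⟨i, hi, j, hj, hij, c, .inl rfl⟩

lemma mul_right (h : TransvectionReach S A B) (hi : i ∈ S) (hj : j ∈ S) (hij : i ≠ j) (c : ℤ) :
    TransvectionReach S A (B * transvection i j c) :=
  h.tail ⟨i, hi, j, hj, hij, c, .inr rfl⟩

lemma mono {T : Finset n} (h : TransvectionReach S A B) (hST : S ⊆ T) :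
    TransvectionReach T A B :=
  Relation.ReflTransGen.mono
    (fun _ _ ⟨i, hi, j, hj, hij, c, hc⟩ => ⟨i, hST hi, j, hST hj, hij, c, hc⟩) _ _ h

lemma exists_eq_mul_mul (h : TransvectionReach S A B) :
    ∃ P Q : SpecialLinearGroup n ℤ, B = P * A * Q := by
  induction h with
  | refl => exact ⟨1, 1, by simp⟩
  | tail _ hstep ih =>
    obtain ⟨P, Q, rfl⟩ := ih
    obtain ⟨i, -, j, -, hij, c, rfl | rfl⟩ := hstep <;>
      let T : SpecialLinearGroup n ℤ := ⟨transvection i j c, det_transvection_of_ne i j hij c⟩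
    · exact ⟨T * P, Q, by rw [SpecialLinearGroup.coe_mul]; simp only [T, Matrix.mul_assoc]⟩
    · exact ⟨P, Q * T, by rw [SpecialLinearGroup.coe_mul]; simp only [T, Matrix.mul_assoc]⟩

lemma isDiagOutside (h : TransvectionReach S A B) (hA : IsDiagOutside S A) :
    IsDiagOutside S B := by
  induction h with
  | refl => exact hA
  | tail _ hstep ih =>
    obtain ⟨i, hi, j, hj, -, c, rfl | rfl⟩ := hstep
    · intro m l hml hout
      by_cases hm : m = i
      · subst hm
        have hl : l ∉ S := by tauto
        rw [transvection_mul_apply_same, ih m l hml (.inr hl),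
          ih j l (by rintro rfl; exact hl hj) (.inr hl), mul_zero, add_zero]
      · rw [transvection_mul_apply_of_ne (ha := hm), ih m l hml hout]
    · intro m l hml hout
      by_cases hl : l = j
      · subst hl
        have hm : m ∉ S := by tauto
        rw [mul_transvection_apply_same, ih m l hml (.inl hm),
          ih m i (by rintro rfl; exact hm hi) (.inl hm), mul_zero, add_zero]
      · rw [mul_transvection_apply_of_ne (hb := hl), ih m l hml hout]

end TransvectionReach

variable {S : Finset n} {k l : n}

/-- The column operations `col l += (-q - 1) • col k`, then `col k += col l`, with
`q = B k l / B k k`, put the remainder of `B k l` modulo the pivot into the pivot position. -/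
lemma exists_reach_apply_eq_emod_right (hk : k ∈ S) (hl : l ∈ S) (hkl : k ≠ l)
    (B : Matrix n n ℤ) : ∃ C, TransvectionReach S B C ∧ C k k = B k l % B k k :=
  ⟨B * transvection k l (-(B k l / B k k) - 1) * transvection l k 1,
    ((TransvectionReach.mul_right .refl hk hl hkl _).mul_right hl hk hkl.symm 1), by
    rw [mul_transvection_apply_same, mul_transvection_apply_same,
      mul_transvection_apply_of_ne (hb := hkl), Int.emod_def]
    ring⟩

lemma exists_reach_apply_eq_emod_left (hk : k ∈ S) (hl : l ∈ S) (hkl : k ≠ l)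
    (B : Matrix n n ℤ) : ∃ C, TransvectionReach S B C ∧ C k k = B l k % B k k :=
  ⟨transvection k l 1 * (transvection l k (-(B l k / B k k) - 1) * B),
    ((TransvectionReach.mul_left .refl hl hk hkl.symm _).mul_left hk hl hkl 1), by
    rw [transvection_mul_apply_same, transvection_mul_apply_same,
      transvection_mul_apply_of_ne (ha := hkl), Int.emod_def]
    ring⟩

lemma exists_reach_pivot_dvd (hk : k ∈ S) (A : Matrix n n ℤ) :
    ∃ B, TransvectionReach S A B ∧ ∀ l ∈ S, B k k ∣ B k l ∧ B k k ∣ B l k := by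
  by_cases hne : ∃ B, TransvectionReach S A B ∧ B k k ≠ 0
  · obtain ⟨B, ⟨hAB, hB⟩, hmin⟩ :=
      exists_minimalFor_of_wellFoundedLT _ (fun B : Matrix n n ℤ => (B k k).natAbs) hne
    have hdvd : ∀ c, (∃ C, TransvectionReach S B C ∧ C k k = c % B k k) → B k k ∣ c := by
      rintro c ⟨C, hBC, hC⟩
      rw [Int.dvd_iff_emod_eq_zero]
      by_contra hc
      have hlt := Int.natAbs_emod_lt_natAbs c hB
      have := hmin (j := C) ⟨hAB.trans hBC, hC ▸ hc⟩ (by simp only [hC]; omega)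
      simp only [hC] at this
      omega
    refine ⟨B, hAB, fun l hl => ?_⟩
    rcases eq_or_ne k l with rfl | hkl
    · exact ⟨dvd_rfl, dvd_rfl⟩
    exact ⟨hdvd _ (exists_reach_apply_eq_emod_right hk hl hkl B),
      hdvd _ (exists_reach_apply_eq_emod_left hk hl hkl B)⟩
  · push Not at hne
    have hA : A k k = 0 := hne A .refl
    refine ⟨A, .refl, fun l hl => ?_⟩
    rcases eq_or_ne k l with rfl | hkl
    · exact ⟨dvd_rfl, dvd_rfl⟩
    obtain ⟨C, hAC, hC⟩ := exists_reach_apply_eq_emod_right hk hl hkl A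
    obtain ⟨D, hAD, hD⟩ := exists_reach_apply_eq_emod_left hk hl hkl A
    rw [hne C hAC, hA, Int.emod_zero] at hC
    rw [hne D hAD, hA, Int.emod_zero] at hD
    rw [hA, ← hC, ← hD]
    exact ⟨dvd_rfl, dvd_rfl⟩

lemma exists_reach_clear_pair (hk : k ∈ S) (hl : l ∈ S) (hkl : k ≠ l) {C : Matrix n n ℤ}
    (hr : C k k ∣ C k l) (hc : C k k ∣ C l k) :
    ∃ D, TransvectionReach S C D ∧ D k l = 0 ∧ D l k = 0 ∧
      ∀ m, m ≠ l → D k m = C k m ∧ D m k = C m k := by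
  refine ⟨transvection l k (-(C l k / C k k)) * (C * transvection k l (-(C k l / C k k))),
    (TransvectionReach.mul_right .refl hk hl hkl _).mul_left hl hk hkl.symm _, ?_, ?_,
    fun m hm => ⟨?_, ?_⟩⟩
  · rw [transvection_mul_apply_of_ne (ha := hkl), mul_transvection_apply_same, neg_mul,
      Int.ediv_mul_cancel hr, add_neg_cancel]
  · rw [transvection_mul_apply_same, mul_transvection_apply_of_ne (hb := hkl),
      mul_transvection_apply_of_ne (hb := hkl), neg_mul, Int.ediv_mul_cancel hc,
      add_neg_cancel]
  · rw [transvection_mul_apply_of_ne (ha := hkl), mul_transvection_apply_of_ne (hb := hm)]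
  · rw [transvection_mul_apply_of_ne (ha := hm), mul_transvection_apply_of_ne (hb := hkl)]

lemma exists_reach_pivot (hk : k ∈ S) (A : Matrix n n ℤ) :
    ∃ B, TransvectionReach S A B ∧ ∀ l ∈ S, l ≠ k → B k l = 0 ∧ B l k = 0 := by
  obtain ⟨B, hAB, hB⟩ := exists_reach_pivot_dvd hk A
  suffices ∀ T ⊆ S, ∃ C, TransvectionReach S B C ∧ C k k = B k k ∧
      (∀ l ∈ S, B k k ∣ C k l ∧ B k k ∣ C l k) ∧ ∀ l ∈ T, l ≠ k → C k l = 0 ∧ C l k = 0 by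
    obtain ⟨C, hBC, -, -, hC⟩ := this S subset_rfl
    exact ⟨C, hAB.trans hBC, hC⟩
  intro T hT
  induction T using Finset.induction_on with
  | empty => exact ⟨B, .refl, rfl, hB, by simp⟩
  | insert l T hlT ih =>
    obtain ⟨C, hBC, hCkk, hCdvd, hC⟩ := ih ((Finset.subset_insert l T).trans hT)
    have hl : l ∈ S := hT (Finset.mem_insert_self l T)
    rcases eq_or_ne k l with rfl | hkl
    · exact ⟨C, hBC, hCkk, hCdvd, fun m hm hmk =>
        hC m ((Finset.mem_insert.1 hm).resolve_left hmk) hmk⟩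
    obtain ⟨D, hCD, hDkl, hDlk, hD⟩ :=
      exists_reach_clear_pair hk hl hkl (hCkk ▸ (hCdvd l hl).1) (hCkk ▸ (hCdvd l hl).2)
    refine ⟨D, hBC.trans hCD, (hD k hkl).1.trans hCkk, fun m hm => ?_, fun m hm hmk => ?_⟩
    · rcases eq_or_ne m l with rfl | hml
      · simp [hDkl, hDlk]
      · rw [(hD m hml).1, (hD m hml).2]
        exact hCdvd m hm
    · rcases eq_or_ne m l with rfl | hml
      · exact ⟨hDkl, hDlk⟩
      · rw [(hD m hml).1, (hD m hml).2]
        exact hC m (by simpa [hml] using hm) hmk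

lemma exists_reach_isDiag (S : Finset n) (A : Matrix n n ℤ) (hA : IsDiagOutside S A) :
    ∃ B, TransvectionReach S A B ∧ B.IsDiag := by
  induction S using Finset.induction_on generalizing A with
  | empty => exact ⟨A, .refl, fun i j hij => hA i j hij (.inl (Finset.notMem_empty i))⟩
  | insert k S hkS ih =>
    obtain ⟨B, hAB, hB⟩ := exists_reach_pivot (Finset.mem_insert_self k S) A
    have hB' := hAB.isDiagOutside hA
    obtain ⟨C, hBC, hC⟩ := ih B fun i j hij hout => by
      by_cases hi : i ∈ insert k S <;> by_cases hj : j ∈ insert k S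
      · rcases eq_or_ne i k with rfl | hik
        · exact (hB j hj (Ne.symm hij)).1
        · rcases eq_or_ne j k with rfl | hjk
          · exact (hB i hi hij).2
          · simp [hik, hjk] at hi hj; tauto
      all_goals exact hB' i j hij (by tauto)
    exact ⟨C, hAB.trans (hBC.mono (Finset.subset_insert k S)), hC⟩

theorem exists_specialLinearGroup_mul_mul_eq_diagonal (A : Matrix n n ℤ) :
    ∃ (P Q : SpecialLinearGroup n ℤ) (d : n → ℤ), (P : Matrix n n ℤ) * A * Q = diagonal d := by
  obtain ⟨B, hAB, hB⟩ := exists_reach_isDiag Finset.univ A fun i j _ h => by simp at h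
  obtain ⟨P, Q, rfl⟩ := hAB.exists_eq_mul_mul
  exact ⟨P, Q, _, hB.diagonal_diag.symm⟩

end Matrix

namespace FreudenthalZ

lemma adjugate_single (i j : Fin 3) (c : ℤ) : (single i j c : MatZ).adjugate = 0 := by
  ext k l
  obtain ⟨m, hml, hmi⟩ : ∃ m, m ≠ l ∧ m ≠ i := by revert l i; decide
  rw [adjugate_apply, Matrix.zero_apply]
  refine det_eq_zero_of_row_eq_zero m fun r => ?_
  simp [updateRow_ne hml, single, Ne.symm hmi]

lemma det_single (i j : Fin 3) (c : ℤ) : (single i j c : MatZ).det = 0 := by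
  obtain ⟨m, hmi⟩ := exists_ne i
  refine det_eq_zero_of_row_eq_zero m fun r => ?_
  simp [single, Ne.symm hmi]

@[simp] lemma tb_zero_left (X : MatZ) : tb 0 X = 0 := by simp [tb]

@[simp] lemma tb_zero_right (X : MatZ) : tb X 0 = 0 := by simp [tb]

lemma tb_single (X : MatZ) (i j : Fin 3) (c : ℤ) : tb X (single i j c) = X j i * c := by
  simp [tb, trace_mul_single]

def Reach (x y : MZ) : Prop := ∃ g, ZWord g ∧ g x = y

namespace Reach

variable {x y z : MZ}

lemma refl (x : MZ) : Reach x x := ⟨Tmap 1 1, .tmap 1 1 rfl, by simp [Tmap]⟩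

lemma trans (hxy : Reach x y) (hyz : Reach y z) : Reach x z := by
  obtain ⟨g, hg, rfl⟩ := hxy
  obtain ⟨f, hf, rfl⟩ := hyz
  exact ⟨f ∘ g, .comp hf hg, rfl⟩

lemma phi (h : Reach x y) (C : MatZ) : Reach x (phiMap C y) := h.trans ⟨_, .phi C, rfl⟩

lemma psi (h : Reach x y) (D : MatZ) : Reach x (psiMap D y) := h.trans ⟨_, .psi D, rfl⟩

lemma tau (h : Reach x y) : Reach x (tauMap y) := h.trans ⟨_, .tau, rfl⟩

end Reach

lemma exists_reach_fst_ne_zero {x : MZ} (hx : x ≠ 0) : ∃ y, Reach x y ∧ y.1 ≠ 0 := by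
  obtain ⟨a, b, A, B⟩ := x
  have exists_entry : ∀ M : MatZ, M ≠ 0 → ∃ i j, M i j ≠ 0 := fun M hM => by
    by_contra! h
    exact hM (Matrix.ext h)
  rcases ne_or_eq a 0 with ha | rfl
  · exact ⟨_, .refl _, ha⟩
  rcases ne_or_eq b 0 with hb | rfl
  · exact ⟨_, (Reach.refl _).tau, neg_ne_zero.mpr hb⟩
  rcases ne_or_eq A 0 with hA | rfl
  · obtain ⟨i, j, hij⟩ := exists_entry A hA
    refine ⟨_, ((Reach.refl _).psi (single j i 1)).tau, ?_⟩
    simpa [psiMap, tauMap, tb_single, adjugate_single] using hij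
  obtain ⟨i, j, hij⟩ := exists_entry B (by rintro rfl; exact hx rfl)
  refine ⟨_, (Reach.refl _).phi (single j i 1), ?_⟩
  simpa [phiMap, tb_single] using hij

def FstMinimal (y : MZ) : Prop := 0 < y.1 ∧ ∀ z, Reach y z → 0 < z.1 → y.1 ≤ z.1

lemma exists_reach_fstMinimal {x : MZ} (hx : x ≠ 0) : ∃ y, Reach x y ∧ FstMinimal y := by
  obtain ⟨y, hxy, hy⟩ := exists_reach_fst_ne_zero hx
  have hpos : ∃ y, Reach x y ∧ 0 < y.1 := by
    rcases hy.lt_or_gt with hy | hy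
    · exact ⟨_, hxy.tau.tau, by simpa [tauMap] using hy⟩
    · exact ⟨y, hxy, hy⟩
  obtain ⟨y, ⟨hxy, hy⟩, hmin⟩ :=
    exists_minimalFor_of_wellFoundedLT _ (fun y : MZ => y.1.toNat) hpos
  refine ⟨y, hxy, hy, fun z hyz hz => ?_⟩
  by_contra! hlt
  have := hmin (j := z) ⟨hxy.trans hyz, hz⟩ (by dsimp only; omega)
  simp only at this
  omega

lemma FstMinimal.of_reach {y z : MZ} (hy : FstMinimal y) (hyz : Reach y z) (h : z.1 = y.1) :
    FstMinimal z :=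
  ⟨h ▸ hy.1, fun w hzw hw => h ▸ hy.2 w (hyz.trans hzw) hw⟩

lemma FstMinimal.dvd {y : MZ} (hy : FstMinimal y) {c : ℤ}
    (h : ∀ k, ∃ z, Reach y z ∧ z.1 = c + y.1 * k) : y.1 ∣ c := by
  obtain ⟨z, hyz, hz⟩ := h (-(c / y.1))
  have hz' : z.1 = c % y.1 := by rw [hz, Int.emod_def]; ring
  have := Int.emod_nonneg c hy.1.ne'
  have := Int.emod_lt_of_pos c hy.1
  have := hy.2 z hyz
  rw [Int.dvd_iff_emod_eq_zero]
  omega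

lemma exists_reach_fst_eq_B_add_mul (a b : ℤ) (A B : MatZ) (i j : Fin 3) (k : ℤ) :
    ∃ z, Reach (a, b, A, B) z ∧ z.1 = B i j + a * k := by
  refine ⟨_, ((Reach.refl _).psi (single i j (k - 1))).phi (single j i 1), ?_⟩
  simp [phiMap, psiMap, tb_single, adjugate_single, det_single]
  ring

lemma exists_reach_B_eq_zero (a b : ℤ) (A B : MatZ) (hB : ∀ i j, a ∣ B i j) :
    ∃ b' A', Reach (a, b, A, B) (a, b', A', 0) := by
  have hD : B + a • B.map (fun t => -(t / a)) = 0 := by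
    ext i j
    simp only [Matrix.add_apply, Matrix.smul_apply, map_apply, smul_eq_mul, mul_neg,
      Int.mul_ediv_cancel' (hB i j), add_neg_cancel, Matrix.zero_apply]
  exact ⟨_, _, by
    simpa only [psiMap, hD] using (Reach.refl (a, b, A, B)).psi (B.map (fun t => -(t / a)))⟩

lemma exists_reach_diagonal (a b : ℤ) (A : MatZ) :
    ∃ d, Reach (a, b, A, 0) (a, b, diagonal d, 0) := by
  obtain ⟨P, Q, d, hPQ⟩ := exists_specialLinearGroup_mul_mul_eq_diagonal A
  refine ⟨d, Tmap (SpecialLinearGroup.toGL P) (SpecialLinearGroup.toGL Q⁻¹), .tmap _ _ ?_, ?_⟩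
  · simp
  · simp only [Tmap, SpecialLinearGroup.coe_GL_coe_matrix, ← map_inv, inv_inv, hPQ]
    simp only [Matrix.SpecialLinearGroup.det_coe, one_mul, Matrix.mul_zero, Matrix.zero_mul]

/-- `τ` brings `-β` to the first coordinate and `A` to the last, and `φ(C)` then adds
`(A, C) + α · det C`; this `C` has diagonal `c` and determinant `c₀ c₁ c₂ + k`. -/
lemma exists_reach_fst_eq_of_diagonal (a b : ℤ) (d c : Fin 3 → ℤ) (k : ℤ) :
    ∃ z, Reach (a, b, diagonal d, 0) z ∧
      z.1 = (-b + ∑ p, d p * c p + a * ∏ p, c p) + a * k := by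
  refine ⟨_, (Reach.refl _).tau.phi !![c 0, 1, 0; 0, c 1, 1; k, 0, c 2], ?_⟩
  simp [phiMap, tauMap, tb, det_fin_three, trace_fin_three, Fin.sum_univ_three,
    Fin.prod_univ_three]
  ring

lemma FstMinimal.dvd_of_diagonal {a b : ℤ} {d : Fin 3 → ℤ} (hy : FstMinimal (a, b, diagonal d, 0))
    (c : Fin 3 → ℤ) : a ∣ -b + ∑ p, d p * c p :=
  (dvd_add_left (dvd_mul_right a _)).mp (hy.dvd (exists_reach_fst_eq_of_diagonal a b d c))

end FreudenthalZ

/-- **Reduction Lemma I**: every nonzero element of `M_ℤ` is equivalent to a diagonal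
reduced element under a finite product of the elementary transformations. -/
theorem reduction_lemma_I (x : MZ) (hx : x ≠ 0) :
    ∃ g : MZ → MZ, ZWord g ∧ DiagReduced (g x) := by
  obtain ⟨⟨a, b, A, B⟩, hxy, hmin⟩ := exists_reach_fstMinimal hx
  obtain ⟨b₁, A₁, hB⟩ := exists_reach_B_eq_zero a b A B fun i j =>
    hmin.dvd (exists_reach_fst_eq_B_add_mul a b A B i j)
  obtain ⟨d, hA⟩ := exists_reach_diagonal a b₁ A₁
  have hdiag := hmin.of_reach (hB.trans hA) rfl
  have hb : a ∣ b₁ := by simpa using hdiag.dvd_of_diagonal 0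
  have hd (i : Fin 3) : a ∣ d i := by
    refine (dvd_add_right (dvd_neg.mpr hb)).mp ?_
    simpa [Pi.single_apply] using hdiag.dvd_of_diagonal (Pi.single i 1)
  obtain ⟨g, hg, hgx⟩ := hxy.trans (hB.trans hA)
  refine ⟨g, hg, a, b₁, d 0, d 1, d 2, ?_, hmin.1, hb, hd 0, hd 1, hd 2⟩
  rw [hgx]
  congr
  ext i
  fin_cases i <;> rfl
end
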